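/- arXiv:1111.5322 — 5 statements merged into one kernel-verified Lean document; each statement's English description precedes it below -/
import Mathlib

section
/- In any triangle with vertices A, B, C in the plane, if x is an interior point and a, b, c are interior points of the triangles BCx, ACx, ABx respectively, then at least one of the segments Ax, Bx, Cx fails the locally Delaunay condition; equivalently, for at least one of the three edges Ax, Bx, Cx, the two angles opposite to it (at the points among a, b, c in the two adjacent triangles) sum to at least π. -/
open EuclideanGeometry Real

/-- Key analytic fact: if `s` is a positive combination of nonzero vectors `u` and `v`,
then the angles from `u` to `s` and from `v` to `s` sum to at most `π`. -/
lemma angle_add_angle_smul_add_smul_le_pi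
    {E : Type*} [NormedAddCommGroup E] [InnerProductSpace ℝ E]
    (u v : E) (p q : ℝ) (hu : u ≠ 0) (hv : v ≠ 0) (hp : 0 < p) (hq : 0 < q) :
    InnerProductGeometry.angle u (p • u + q • v)
      + InnerProductGeometry.angle v (p • u + q • v) ≤ π := by
  set s : E := p • u + q • v with hs
  by_cases h0 : s = 0
  · simp [InnerProductGeometry.angle, h0, Real.arccos_zero]
  · have hnu : (0:ℝ) < ‖u‖ := norm_pos_iff.mpr hu
    have hnv : (0:ℝ) < ‖v‖ := norm_pos_iff.mpr hv
    have hns : (0:ℝ) < ‖s‖ := norm_pos_iff.mpr h0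
    have hius : (inner ℝ u s : ℝ) = p * (‖u‖ * ‖u‖) + q * inner ℝ u v := by
      rw [hs, inner_add_right, real_inner_smul_right, real_inner_smul_right,
        real_inner_self_eq_norm_mul_norm]
    have hivs : (inner ℝ v s : ℝ) = p * inner ℝ u v + q * (‖v‖ * ‖v‖) := by
      rw [hs, inner_add_right, real_inner_smul_right, real_inner_smul_right,
        real_inner_self_eq_norm_mul_norm, real_inner_comm]
    have huv : |(inner ℝ u v : ℝ)| ≤ ‖u‖ * ‖v‖ := abs_real_inner_le_norm u v
    have huv' : -(‖u‖ * ‖v‖) ≤ (inner ℝ u v : ℝ) := neg_le_of_abs_le huv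
    set t1 : ℝ := inner ℝ u s / (‖u‖ * ‖s‖) with ht1
    set t2 : ℝ := inner ℝ v s / (‖v‖ * ‖s‖) with ht2
    have hsum : 0 ≤ t1 + t2 := by
      rw [ht1, ht2, div_add_div _ _ (by positivity) (by positivity)]
      apply div_nonneg _ (by positivity)
      rw [hius, hivs]
      have hb1 : 0 ≤ p * ‖u‖ * ((inner ℝ u v : ℝ) + ‖u‖ * ‖v‖) :=
        mul_nonneg (mul_pos hp hnu).le (by linarith)
      have hb2 : 0 ≤ q * ‖v‖ * ((inner ℝ u v : ℝ) + ‖u‖ * ‖v‖) :=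
        mul_nonneg (mul_pos hq hnv).le (by linarith)
      nlinarith [mul_nonneg hns.le (add_nonneg hb1 hb2)]
    have h1 : InnerProductGeometry.angle u s = Real.arccos t1 := rfl
    have h2 : InnerProductGeometry.angle v s = Real.arccos t2 := rfl
    rw [h1, h2]
    have : Real.arccos t1 ≤ Real.arccos (-t2) := by
      rw [Real.arccos, Real.arccos]
      have := Real.monotone_arcsin (show -t2 ≤ t1 by linarith)
      linarith
    rw [Real.arccos_neg] at this
    linarith

/-- If `c` lies in the interior of the triangle `A B x` in the plane, then the two
angles `∠ A c x` and `∠ B c x` sum to at least `π`. -/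
lemma pi_le_angle_add_angle_of_mem_interior
    (A B x c : EuclideanSpace ℝ (Fin 2))
    (hc : c ∈ interior (convexHull ℝ {A, B, x})) :
    π ≤ ∠ A c x + ∠ B c x := by
  have hrange : Set.range ![A, B, x] = ({A, B, x} : Set (EuclideanSpace ℝ (Fin 2))) := by
    rw [Matrix.range_cons, Matrix.range_cons, Matrix.range_cons_empty]
    ext y
    simp
    tauto
  have hne : (interior (convexHull ℝ ({A, B, x} : Set (EuclideanSpace ℝ (Fin 2))))).Nonempty :=
    ⟨c, hc⟩
  have htop : affineSpan ℝ ({A, B, x} : Set (EuclideanSpace ℝ (Fin 2))) = ⊤ :=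
    interior_convexHull_nonempty_iff_affineSpan_eq_top.mp hne
  have hind : AffineIndependent ℝ ![A, B, x] := by
    rw [affineIndependent_iff_not_collinear, hrange]
    intro hcol
    have h1 : Module.finrank ℝ (vectorSpan ℝ ({A, B, x} : Set (EuclideanSpace ℝ (Fin 2)))) ≤ 1 := by
      haveI := hcol.finiteDimensional_vectorSpan
      exact hcol.finrank_le_one
    have h2 : vectorSpan ℝ ({A, B, x} : Set (EuclideanSpace ℝ (Fin 2))) = ⊤ := by
      rw [← direction_affineSpan, htop, AffineSubspace.direction_top]
    rw [h2] at h1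
    have h3 : Module.finrank ℝ (EuclideanSpace ℝ (Fin 2)) = 2 := by
      simp [finrank_euclideanSpace]
    rw [finrank_top] at h1
    omega
  have hspan : affineSpan ℝ (Set.range ![A, B, x]) = ⊤ := by rw [hrange]; exact htop
  let β : AffineBasis (Fin 3) ℝ (EuclideanSpace ℝ (Fin 2)) := ⟨![A, B, x], hind, hspan⟩
  have hβrange : Set.range β = ({A, B, x} : Set (EuclideanSpace ℝ (Fin 2))) := hrange
  have hpos : ∀ i, 0 < β.coord i c := by
    have := β.interior_convexHull
    rw [hβrange] at this
    rw [this] at hc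
    exact hc
  have hβ0 : β 0 = A := rfl
  have hβ1 : β 1 = B := rfl
  have hβ2 : β 2 = x := rfl
  -- c is distinct from A and B
  have hcA : c ≠ A := by
    intro h
    have := hpos 1
    rw [h, ← hβ0, β.coord_apply] at this
    simp at this
  have hcB : c ≠ B := by
    intro h
    have := hpos 0
    rw [h, ← hβ1, β.coord_apply] at this
    simp at this
  set α0 := β.coord 0 c with hα0
  set α1 := β.coord 1 c with hα1
  set α2 := β.coord 2 c with hα2
  have hcomb : α0 • A + α1 • B + α2 • x = c := by
    have := β.linear_combination_coord_eq_self c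
    rwa [Fin.sum_univ_three, hβ0, hβ1, hβ2] at this
  have hsum1 : α0 + α1 + α2 = 1 := by
    have := β.sum_coord_apply_eq_one c
    rwa [Fin.sum_univ_three] at this
  set u : EuclideanSpace ℝ (Fin 2) := A - c with hu
  set v : EuclideanSpace ℝ (Fin 2) := B - c with hv
  have hu0 : u ≠ 0 := sub_ne_zero.mpr (fun h => hcA h.symm)
  have hv0 : v ≠ 0 := sub_ne_zero.mpr (fun h => hcB h.symm)
  have hkey : α2 • (x - c) = -(α0 • u + α1 • v) := by
    rw [hu, hv]
    have : α0 • A + α1 • B + α2 • x - (α0 + α1 + α2) • c = 0 := by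
      rw [hcomb, hsum1, one_smul, sub_self]
    rw [smul_sub, smul_sub, smul_sub]
    rw [add_smul, add_smul] at this
    abel_nf
    abel_nf at this
    linear_combination (norm := module) this
  have hxc : x - c = α2⁻¹ • -(α0 • u + α1 • v) := by
    rw [← hkey, smul_smul, inv_mul_cancel₀ (ne_of_gt (hpos 2)), one_smul]
  have hA : ∠ A c x = π - InnerProductGeometry.angle u (α0 • u + α1 • v) := by
    show InnerProductGeometry.angle (A -ᵥ c) (x -ᵥ c) = _
    have : (A -ᵥ c : EuclideanSpace ℝ (Fin 2)) = u := rfl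
    rw [this]
    have hx2 : (x -ᵥ c : EuclideanSpace ℝ (Fin 2)) = x - c := rfl
    rw [hx2, hxc, InnerProductGeometry.angle_smul_right_of_pos _ _ (inv_pos.mpr (hpos 2)),
      InnerProductGeometry.angle_neg_right]
  have hB : ∠ B c x = π - InnerProductGeometry.angle v (α0 • u + α1 • v) := by
    show InnerProductGeometry.angle (B -ᵥ c) (x -ᵥ c) = _
    have : (B -ᵥ c : EuclideanSpace ℝ (Fin 2)) = v := rfl
    rw [this]
    have hx2 : (x -ᵥ c : EuclideanSpace ℝ (Fin 2)) = x - c := rfl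
    rw [hx2, hxc, InnerProductGeometry.angle_smul_right_of_pos _ _ (inv_pos.mpr (hpos 2)),
      InnerProductGeometry.angle_neg_right]
  have := angle_add_angle_smul_add_smul_le_pi u v α0 α1 hu0 hv0 (hpos 0) (hpos 1)
  rw [hA, hB]
  linarith

/-- In any triangle `ABC` in the plane with interior point `x`, and points `a`, `b`, `c`
interior to the triangles `BCx`, `ACx`, `ABx` respectively, at least one of the edges
`Ax`, `Bx`, `Cx` fails the locally Delaunay condition: the two opposite angles (at the
apex points among `a, b, c` of the two adjacent triangles) sum to at least `π`. -/
theorem stacked_triangle_not_all_locally_Delaunay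
    (A B C x a b c : EuclideanSpace ℝ (Fin 2))
    (hABC : AffineIndependent ℝ ![A, B, C])
    (hx : x ∈ interior (convexHull ℝ {A, B, C}))
    (ha : a ∈ interior (convexHull ℝ {B, C, x}))
    (hb : b ∈ interior (convexHull ℝ {A, C, x}))
    (hc : c ∈ interior (convexHull ℝ {A, B, x})) :
    π ≤ ∠ A b x + ∠ A c x ∨ π ≤ ∠ B a x + ∠ B c x ∨ π ≤ ∠ C a x + ∠ C b x := by
  have h1 := pi_le_angle_add_angle_of_mem_interior B C x a ha
  have h2 := pi_le_angle_add_angle_of_mem_interior A C x b hb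
  have h3 := pi_le_angle_add_angle_of_mem_interior A B x c hc
  by_contra h
  push_neg at h
  obtain ⟨g1, g2, g3⟩ := h
  linarith
end

section
/- In the plane, the edge joining x to C shared by triangles (C, x, b') and (C, x, a') is locally Delaunay (i.e., b' lies strictly outside the circumcircle of triangle C x a') if and only if the angle at a' in triangle C x a' plus the angle at b' in triangle C x b' is strictly less than π. -/
open EuclideanGeometry Real

lemma inner_coord (v w : EuclideanSpace ℝ (Fin 2)) :
    (inner ℝ v w : ℝ) = v 0 * w 0 + v 1 * w 1 := by
  simp [PiLp.inner_apply, RCLike.inner_apply, Fin.sum_univ_two, mul_comm]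

lemma dist_sq (p q : EuclideanSpace ℝ (Fin 2)) :
    dist p q ^ 2 = (p 0 - q 0) ^ 2 + (p 1 - q 1) ^ 2 := by
  rw [EuclideanSpace.dist_eq, Real.sq_sqrt (by positivity)]
  simp [Fin.sum_univ_two, Real.dist_eq, sq_abs]

lemma sin_angle_mul (v w : EuclideanSpace ℝ (Fin 2)) :
    Real.sin (InnerProductGeometry.angle v w) * (‖v‖ * ‖w‖)
      = |v 0 * w 1 - v 1 * w 0| := by
  rw [InnerProductGeometry.sin_angle_mul_norm_mul_norm, inner_coord, inner_coord, inner_coord,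
    show (v 0 * v 0 + v 1 * v 1) * (w 0 * w 0 + w 1 * w 1)
        - (v 0 * w 0 + v 1 * w 1) * (v 0 * w 0 + v 1 * w 1)
      = (v 0 * w 1 - v 1 * w 0) ^ 2 by ring,
    Real.sqrt_sq_eq_abs]

lemma cos_angle_mul (v w : EuclideanSpace ℝ (Fin 2)) :
    Real.cos (InnerProductGeometry.angle v w) * (‖v‖ * ‖w‖) = v 0 * w 0 + v 1 * w 1 := by
  rw [InnerProductGeometry.cos_angle_mul_norm_mul_norm, inner_coord]

lemma sum_lt_pi_iff {α β : ℝ} (hα0 : 0 < α) (hαπ : α < π) (hβ0 : 0 < β) (hβπ : β < π) :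
    α + β < π ↔ 0 < Real.sin α * Real.cos β + Real.cos α * Real.sin β := by
  rw [← Real.sin_add]
  constructor
  · exact fun h => Real.sin_pos_of_pos_of_lt_pi (by linarith) h
  · intro h
    by_contra hc
    push_neg at hc
    have h2 : 0 ≤ Real.sin (α + β - π) :=
      Real.sin_nonneg_of_nonneg_of_le_pi (by linarith) (by linarith)
    rw [Real.sin_sub_pi] at h2
    linarith

lemma angle_mem_Ioo {v w : EuclideanSpace ℝ (Fin 2)} (h : v 0 * w 1 - v 1 * w 0 ≠ 0) :
    0 < InnerProductGeometry.angle v w ∧ InnerProductGeometry.angle v w < π ∧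
      0 < ‖v‖ * ‖w‖ := by
  have hs := sin_angle_mul v w
  have habs : 0 < |v 0 * w 1 - v 1 * w 0| := abs_pos.2 h
  have hn : 0 ≤ ‖v‖ * ‖w‖ := by positivity
  have hN : 0 < ‖v‖ * ‖w‖ := by
    rcases hn.lt_or_eq with h1 | h1
    · exact h1
    · rw [← h1, mul_zero] at hs; rw [← hs] at habs; exact absurd habs (lt_irrefl 0)
  have hsin : 0 < Real.sin (InnerProductGeometry.angle v w) := by
    nlinarith
  refine ⟨?_, ?_, hN⟩
  · rcases (InnerProductGeometry.angle_nonneg v w).lt_or_eq with h1 | h1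
    · exact h1
    · exfalso; rw [← h1, Real.sin_zero] at hsin; exact lt_irrefl 0 hsin
  · rcases (InnerProductGeometry.angle_le_pi v w).lt_or_eq with h1 | h1
    · exact h1
    · exfalso; rw [h1, Real.sin_pi] at hsin; exact lt_irrefl 0 hsin

lemma aux_pos_of_mul_neg_left {a b : ℝ} (h : a * b < 0) (ha : a < 0) : 0 < b := by nlinarith

lemma aux_neg_of_mul_neg_left {a b : ℝ} (h : a * b < 0) (ha : 0 < a) : b < 0 := by nlinarith

lemma aux_pos_of_mul_pos {a b : ℝ} (h : 0 < a * b) (hb : 0 < b) : 0 < a := by nlinarith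

lemma aux_pos_of_mul_neg {a b : ℝ} (h : a * b < 0) (hb : b < 0) : 0 < a := by nlinarith

lemma aux_pos_of_mul_eq {S M R : ℝ} (hM : 0 < M) (h : S * M = R) (hR : 0 < R) : 0 < S := by
  nlinarith

set_option maxHeartbeats 1000000

/-- In the plane, for points `a'`, `b'` strictly on opposite sides of the line through
`C` and `x`, the edge `Cx` shared by the triangles `C x a'` and `C x b'` is locally
Delaunay (i.e. `b'` lies strictly outside the circumcircle of `C x a'`, whose center is
`o` and radius is `r`) if and only if the angle at `a'` in triangle `C x a'` plus the
angle at `b'` in triangle `C x b'` is strictly less than `π`. -/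
theorem locally_Delaunay_iff_angle_sum_lt_pi
    (C x a' b' : EuclideanSpace ℝ (Fin 2))
    (hopp : (affineSpan ℝ ({C, x} : Set (EuclideanSpace ℝ (Fin 2)))).SOppSide a' b')
    (o : EuclideanSpace ℝ (Fin 2)) (r : ℝ)
    (hC : dist o C = r) (hx : dist o x = r) (ha : dist o a' = r) :
    r < dist o b' ↔ ∠ C a' x + ∠ C b' x < π := by
  have hC2 : (o 0 - C 0) ^ 2 + (o 1 - C 1) ^ 2 = r ^ 2 := by rw [← dist_sq, hC]
  have hx2 : (o 0 - x 0) ^ 2 + (o 1 - x 1) ^ 2 = r ^ 2 := by rw [← dist_sq, hx]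
  have ha2 : (o 0 - a' 0) ^ 2 + (o 1 - a' 1) ^ 2 = r ^ 2 := by rw [← dist_sq, ha]
  have hr0 : 0 ≤ r := hC ▸ dist_nonneg
  have hb2 := dist_sq o b'
  have hLHS : (r < dist o b') ↔ 0 < (o 0 - b' 0) ^ 2 + (o 1 - b' 1) ^ 2 - r ^ 2 := by
    constructor
    · intro h; nlinarith [dist_nonneg (x := o) (y := b')]
    · intro h; nlinarith [dist_nonneg (x := o) (y := b')]
  rw [hLHS]
  by_cases hCx : C = x
  · rw [← hCx] at hopp ⊢
    rw [Set.pair_eq_singleton] at hopp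
    have hne_a : a' ≠ C := fun h =>
      hopp.left_notMem ((AffineSubspace.mem_affineSpan_singleton ℝ _).mpr h)
    have hne_b : b' ≠ C := fun h =>
      hopp.right_notMem ((AffineSubspace.mem_affineSpan_singleton ℝ _).mpr h)
    rw [EuclideanGeometry.angle_self_of_ne (fun h => hne_a h.symm),
      EuclideanGeometry.angle_self_of_ne (fun h => hne_b h.symm), add_zero]
    refine iff_of_true ?_ Real.pi_pos
    obtain ⟨p₁, hp₁, p₂, hp₂, hray⟩ := hopp.1
    rw [AffineSubspace.mem_affineSpan_singleton] at hp₁ hp₂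
    rw [hp₁, hp₂] at hray
    have h1 : (a' -ᵥ C : EuclideanSpace ℝ (Fin 2)) ≠ 0 := vsub_ne_zero.2 hne_a
    have h2 : (C -ᵥ b' : EuclideanSpace ℝ (Fin 2)) ≠ 0 := vsub_ne_zero.2 (fun h => hne_b h.symm)
    obtain ⟨r₁, r₂, hr₁, hr₂, hkey⟩ := hray.exists_pos h1 h2
    have k0 : r₁ * (a' 0 - C 0) = r₂ * (C 0 - b' 0) := by
      simpa using congr_arg (fun v : EuclideanSpace ℝ (Fin 2) => v 0) hkey
    have k1 : r₁ * (a' 1 - C 1) = r₂ * (C 1 - b' 1) := by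
      simpa using congr_arg (fun v : EuclideanSpace ℝ (Fin 2) => v 1) hkey
    set k : ℝ := r₁ / r₂ with hk
    have hkpos : 0 < k := div_pos hr₁ hr₂
    have hb0 : b' 0 = C 0 - k * (a' 0 - C 0) := by
      rw [hk]; field_simp; linarith [k0]
    have hb1 : b' 1 = C 1 - k * (a' 1 - C 1) := by
      rw [hk]; field_simp; linarith [k1]
    have hdista : 0 < dist a' C := dist_pos.2 hne_a
    have hpos : 0 < (a' 0 - C 0) ^ 2 + (a' 1 - C 1) ^ 2 := by
      nlinarith [dist_sq a' C]
    have hkey2 : (o 0 - b' 0) ^ 2 + (o 1 - b' 1) ^ 2 - r ^ 2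
        = (k ^ 2 + k) * ((a' 0 - C 0) ^ 2 + (a' 1 - C 1) ^ 2) := by
      rw [hb0, hb1]
      linear_combination (1 + k) * hC2 - k * ha2
    rw [hkey2]
    have : 0 < k ^ 2 + k := by nlinarith
    exact mul_pos this hpos

  · -- main case : C ≠ x
    obtain ⟨p, hp, hsbtw⟩ := hopp.exists_sbtw
    have hp' : (p - C) +ᵥ C ∈ line[ℝ, C, x] := by
      simpa using hp
    obtain ⟨t, ht⟩ := (vadd_left_mem_affineSpan_pair).mp hp'
    rw [sbtw_iff_mem_image_Ioo_and_ne] at hsbtw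
    obtain ⟨⟨u, hu, hup⟩, _⟩ := hsbtw
    have hup' : u • (b' - a') + a' = p := by
      rw [← hup, AffineMap.lineMap_apply_module']
    have hcomb : u • (b' - a') + a' = t • (x - C) + C := by
      rw [hup']
      have : p - C = t • (x - C) := by rw [← ht]; simp
      have h2 := sub_eq_iff_eq_add.mp this
      exact h2
    have e0 : u * (b' 0 - a' 0) + a' 0 = t * (x 0 - C 0) + C 0 := by
      simpa using congr_arg (fun v : EuclideanSpace ℝ (Fin 2) => v 0) hcomb
    have e1 : u * (b' 1 - a' 1) + a' 1 = t * (x 1 - C 1) + C 1 := by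
      simpa using congr_arg (fun v : EuclideanSpace ℝ (Fin 2) => v 1) hcomb
    have hdistx : 0 < dist x C := dist_pos.2 (fun h => hCx h.symm)
    have hnx : 0 < (x 0 - C 0) ^ 2 + (x 1 - C 1) ^ 2 := by nlinarith [dist_sq x C]
    -- the two determinants
    have hda : (x 0 - C 0) * (a' 1 - C 1) - (x 1 - C 1) * (a' 0 - C 0) ≠ 0 := by
      intro h0
      apply hopp.left_notMem
      have hmem : (a' - C) +ᵥ C ∈ line[ℝ, C, x] := by
        refine (vadd_left_mem_affineSpan_pair).mpr
          ⟨((a' 0 - C 0) * (x 0 - C 0) + (a' 1 - C 1) * (x 1 - C 1)) /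
            ((x 0 - C 0) ^ 2 + (x 1 - C 1) ^ 2), ?_⟩
        have hxv : (x -ᵥ C : EuclideanSpace ℝ (Fin 2)) = x - C := rfl
        rw [hxv]
        ext i
        fin_cases i
        · show _ * ((x - C) 0) = (a' - C) 0
          have hs0 : ((x - C : EuclideanSpace ℝ (Fin 2)) 0) = x 0 - C 0 := rfl
          have ha0 : ((a' - C : EuclideanSpace ℝ (Fin 2)) 0) = a' 0 - C 0 := rfl
          rw [hs0, ha0]
          field_simp
          linear_combination (x 1 - C 1) * h0
        · show _ * ((x - C) 1) = (a' - C) 1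
          have hs1 : ((x - C : EuclideanSpace ℝ (Fin 2)) 1) = x 1 - C 1 := rfl
          have ha1 : ((a' - C : EuclideanSpace ℝ (Fin 2)) 1) = a' 1 - C 1 := rfl
          rw [hs1, ha1]
          field_simp
          linear_combination (-(x 0 - C 0)) * h0
      simpa using hmem
    have hdb : (x 0 - C 0) * (b' 1 - C 1) - (x 1 - C 1) * (b' 0 - C 0) ≠ 0 := by
      intro h0
      apply hopp.right_notMem
      have hmem : (b' - C) +ᵥ C ∈ line[ℝ, C, x] := by
        refine (vadd_left_mem_affineSpan_pair).mpr
          ⟨((b' 0 - C 0) * (x 0 - C 0) + (b' 1 - C 1) * (x 1 - C 1)) /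
            ((x 0 - C 0) ^ 2 + (x 1 - C 1) ^ 2), ?_⟩
        have hxv : (x -ᵥ C : EuclideanSpace ℝ (Fin 2)) = x - C := rfl
        rw [hxv]
        ext i
        fin_cases i
        · show _ * ((x - C) 0) = (b' - C) 0
          have hs0 : ((x - C : EuclideanSpace ℝ (Fin 2)) 0) = x 0 - C 0 := rfl
          have hb0 : ((b' - C : EuclideanSpace ℝ (Fin 2)) 0) = b' 0 - C 0 := rfl
          rw [hs0, hb0]
          field_simp
          linear_combination (x 1 - C 1) * h0
        · show _ * ((x - C) 1) = (b' - C) 1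
          have hs1 : ((x - C : EuclideanSpace ℝ (Fin 2)) 1) = x 1 - C 1 := rfl
          have hb1 : ((b' - C : EuclideanSpace ℝ (Fin 2)) 1) = b' 1 - C 1 := rfl
          rw [hs1, hb1]
          field_simp
          linear_combination (-(x 0 - C 0)) * h0
      simpa using hmem
    -- opposite signs of the two determinants
    have hl : (1 - u) * ((x 0 - C 0) * (a' 1 - C 1) - (x 1 - C 1) * (a' 0 - C 0))
        + u * ((x 0 - C 0) * (b' 1 - C 1) - (x 1 - C 1) * (b' 0 - C 0)) = 0 := by
      linear_combination (x 0 - C 0) * e1 - (x 1 - C 1) * e0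
    have hdb2 : 0 < ((x 0 - C 0) * (b' 1 - C 1) - (x 1 - C 1) * (b' 0 - C 0)) ^ 2 :=
      lt_of_le_of_ne (sq_nonneg _) (Ne.symm (pow_ne_zero 2 hdb))
    have hsign : ((x 0 - C 0) * (a' 1 - C 1) - (x 1 - C 1) * (a' 0 - C 0))
        * ((x 0 - C 0) * (b' 1 - C 1) - (x 1 - C 1) * (b' 0 - C 0)) < 0 := by
      have h5 : (1 - u) * (((x 0 - C 0) * (a' 1 - C 1) - (x 1 - C 1) * (a' 0 - C 0))
          * ((x 0 - C 0) * (b' 1 - C 1) - (x 1 - C 1) * (b' 0 - C 0)))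
          = -(u * ((x 0 - C 0) * (b' 1 - C 1) - (x 1 - C 1) * (b' 0 - C 0)) ^ 2) := by
        linear_combination ((x 0 - C 0) * (b' 1 - C 1) - (x 1 - C 1) * (b' 0 - C 0)) * hl
      nlinarith [hu.1, hu.2, hdb2]
    -- angles as vector angles
    have hang1 : ∠ C a' x = InnerProductGeometry.angle (C - a') (x - a') := rfl
    have hang2 : ∠ C b' x = InnerProductGeometry.angle (C - b') (x - b') := rfl
    have hdetA : ((C - a' : EuclideanSpace ℝ (Fin 2)) 0) * ((x - a' : EuclideanSpace ℝ (Fin 2)) 1)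
        - ((C - a' : EuclideanSpace ℝ (Fin 2)) 1) * ((x - a' : EuclideanSpace ℝ (Fin 2)) 0)
        = (x 0 - C 0) * (a' 1 - C 1) - (x 1 - C 1) * (a' 0 - C 0) := by
      show (C 0 - a' 0) * (x 1 - a' 1) - (C 1 - a' 1) * (x 0 - a' 0) = _
      ring
    have hdetB : ((C - b' : EuclideanSpace ℝ (Fin 2)) 0) * ((x - b' : EuclideanSpace ℝ (Fin 2)) 1)
        - ((C - b' : EuclideanSpace ℝ (Fin 2)) 1) * ((x - b' : EuclideanSpace ℝ (Fin 2)) 0)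
        = (x 0 - C 0) * (b' 1 - C 1) - (x 1 - C 1) * (b' 0 - C 0) := by
      show (C 0 - b' 0) * (x 1 - b' 1) - (C 1 - b' 1) * (x 0 - b' 0) = _
      ring
    obtain ⟨hA0, hAπ, hNa⟩ := angle_mem_Ioo (v := C - a') (w := x - a') (by rw [hdetA]; exact hda)
    obtain ⟨hB0, hBπ, hNb⟩ := angle_mem_Ioo (v := C - b') (w := x - b') (by rw [hdetB]; exact hdb)
    rw [hang1, hang2, sum_lt_pi_iff hA0 hAπ hB0 hBπ]
    have hsinA := sin_angle_mul (C - a') (x - a')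
    rw [hdetA] at hsinA
    have hsinB := sin_angle_mul (C - b') (x - b')
    rw [hdetB] at hsinB
    have hcosA := cos_angle_mul (C - a') (x - a')
    have hQa : ((C - a' : EuclideanSpace ℝ (Fin 2)) 0) * ((x - a' : EuclideanSpace ℝ (Fin 2)) 0)
        + ((C - a' : EuclideanSpace ℝ (Fin 2)) 1) * ((x - a' : EuclideanSpace ℝ (Fin 2)) 1)
        = (C 0 - a' 0) * (x 0 - a' 0) + (C 1 - a' 1) * (x 1 - a' 1) := rfl
    rw [hQa] at hcosA
    have hcosB := cos_angle_mul (C - b') (x - b')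
    have hQb : ((C - b' : EuclideanSpace ℝ (Fin 2)) 0) * ((x - b' : EuclideanSpace ℝ (Fin 2)) 0)
        + ((C - b' : EuclideanSpace ℝ (Fin 2)) 1) * ((x - b' : EuclideanSpace ℝ (Fin 2)) 1)
        = (C 0 - b' 0) * (x 0 - b' 0) + (C 1 - b' 1) * (x 1 - b' 1) := rfl
    rw [hQb] at hcosB
    -- the key algebraic identity (power of the point b')
    have key : ((o 0 - b' 0) ^ 2 + (o 1 - b' 1) ^ 2 - r ^ 2)
          * ((x 0 - C 0) * (a' 1 - C 1) - (x 1 - C 1) * (a' 0 - C 0))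
        = ((x 0 - C 0) * (a' 1 - C 1) - (x 1 - C 1) * (a' 0 - C 0))
            * ((C 0 - b' 0) * (x 0 - b' 0) + (C 1 - b' 1) * (x 1 - b' 1))
          - ((x 0 - C 0) * (b' 1 - C 1) - (x 1 - C 1) * (b' 0 - C 0))
            * ((C 0 - a' 0) * (x 0 - a' 0) + (C 1 - a' 1) * (x 1 - a' 1)) := by
      linear_combination
        (((x 0 - C 0) * (a' 1 - C 1) - (x 1 - C 1) * (a' 0 - C 0))
          + ((a' 0 - C 0) * (b' 1 - C 1) - (a' 1 - C 1) * (b' 0 - C 0))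
          - ((x 0 - C 0) * (b' 1 - C 1) - (x 1 - C 1) * (b' 0 - C 0))) * hC2
        - ((a' 0 - C 0) * (b' 1 - C 1) - (a' 1 - C 1) * (b' 0 - C 0)) * hx2
        + ((x 0 - C 0) * (b' 1 - C 1) - (x 1 - C 1) * (b' 0 - C 0)) * ha2
    have hNab : 0 < (‖(C - a' : EuclideanSpace ℝ (Fin 2))‖ * ‖(x - a' : EuclideanSpace ℝ (Fin 2))‖)
        * (‖(C - b' : EuclideanSpace ℝ (Fin 2))‖ * ‖(x - b' : EuclideanSpace ℝ (Fin 2))‖) :=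
      mul_pos hNa hNb
    have hprod : (Real.sin (InnerProductGeometry.angle (C - a') (x - a'))
          * Real.cos (InnerProductGeometry.angle (C - b') (x - b'))
        + Real.cos (InnerProductGeometry.angle (C - a') (x - a'))
          * Real.sin (InnerProductGeometry.angle (C - b') (x - b')))
        * ((‖(C - a' : EuclideanSpace ℝ (Fin 2))‖ * ‖(x - a' : EuclideanSpace ℝ (Fin 2))‖)
          * (‖(C - b' : EuclideanSpace ℝ (Fin 2))‖ * ‖(x - b' : EuclideanSpace ℝ (Fin 2))‖))
        = |(x 0 - C 0) * (a' 1 - C 1) - (x 1 - C 1) * (a' 0 - C 0)|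
            * ((C 0 - b' 0) * (x 0 - b' 0) + (C 1 - b' 1) * (x 1 - b' 1))
          + |(x 0 - C 0) * (b' 1 - C 1) - (x 1 - C 1) * (b' 0 - C 0)|
            * ((C 0 - a' 0) * (x 0 - a' 0) + (C 1 - a' 1) * (x 1 - a' 1)) := by
      rw [← hsinA, ← hsinB, ← hcosA, ← hcosB]; ring
    constructor
    · intro h
      have h1 : 0 < |(x 0 - C 0) * (a' 1 - C 1) - (x 1 - C 1) * (a' 0 - C 0)|
            * ((C 0 - b' 0) * (x 0 - b' 0) + (C 1 - b' 1) * (x 1 - b' 1))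
          + |(x 0 - C 0) * (b' 1 - C 1) - (x 1 - C 1) * (b' 0 - C 0)|
            * ((C 0 - a' 0) * (x 0 - a' 0) + (C 1 - a' 1) * (x 1 - a' 1)) := by
        rcases lt_or_gt_of_ne hda with hda' | hda'
        · have hdb' := aux_pos_of_mul_neg_left hsign hda'
          rw [abs_of_neg hda', abs_of_pos hdb']
          have h6 := mul_neg_of_pos_of_neg h hda'
          rw [key] at h6
          linarith
        · have hdb' := aux_neg_of_mul_neg_left hsign hda'
          rw [abs_of_pos hda', abs_of_neg hdb']
          have h6 := mul_pos h hda'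
          rw [key] at h6
          linarith
      exact aux_pos_of_mul_eq hNab hprod h1
    · intro h
      have h1 : 0 < |(x 0 - C 0) * (a' 1 - C 1) - (x 1 - C 1) * (a' 0 - C 0)|
            * ((C 0 - b' 0) * (x 0 - b' 0) + (C 1 - b' 1) * (x 1 - b' 1))
          + |(x 0 - C 0) * (b' 1 - C 1) - (x 1 - C 1) * (b' 0 - C 0)|
            * ((C 0 - a' 0) * (x 0 - a' 0) + (C 1 - a' 1) * (x 1 - a' 1)) := by
        rw [← hprod]; exact mul_pos h hNab
      rcases lt_or_gt_of_ne hda with hda' | hda'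
      · have hdb' := aux_pos_of_mul_neg_left hsign hda'
        rw [abs_of_neg hda', abs_of_pos hdb'] at h1
        have h6 : ((o 0 - b' 0) ^ 2 + (o 1 - b' 1) ^ 2 - r ^ 2)
            * ((x 0 - C 0) * (a' 1 - C 1) - (x 1 - C 1) * (a' 0 - C 0)) < 0 := by
          rw [key]; linarith
        exact aux_pos_of_mul_neg h6 hda'
      · have hdb' := aux_neg_of_mul_neg_left hsign hda'
        rw [abs_of_pos hda', abs_of_neg hdb'] at h1
        have h6 : 0 < ((o 0 - b' 0) ^ 2 + (o 1 - b' 1) ^ 2 - r ^ 2)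
            * ((x 0 - C 0) * (a' 1 - C 1) - (x 1 - C 1) * (a' 0 - C 0)) := by
          rw [key]; linarith
        exact aux_pos_of_mul_pos h6 hda'
end

section
/- A single stellar subdivision of a simplex is Delaunay: if σ = conv{v₁,…,v_d} is a (d−1)-simplex in ℝ^{d−1} and c is an interior point of σ, then for each i, the vertex v_i lies strictly outside the circumsphere of the simplex F_i = conv({c, v₁,…,v_d} \ {v_i}). -/
open EuclideanGeometry Real

open RealInnerProductSpace in
/-- A single stellar subdivision of a simplex is Delaunay: if `v 1, …, v d` are the
vertices of a `(d−1)`-simplex `σ` in `ℝ^(d−1)` and `c` is an interior point of `σ`, then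
for each `i` the vertex `v i` lies strictly outside the circumsphere (center `o`,
radius `r`) of the simplex `F i = conv({c} ∪ {v j : j ≠ i})`. -/
theorem stellar_subdivision_Delaunay
    (d : ℕ) (hd : 2 ≤ d)
    (v : Fin d → EuclideanSpace ℝ (Fin (d - 1)))
    (hv : AffineIndependent ℝ v)
    (c : EuclideanSpace ℝ (Fin (d - 1)))
    (hc : c ∈ interior (convexHull ℝ (Set.range v)))
    (i : Fin d) (o : EuclideanSpace ℝ (Fin (d - 1))) (r : ℝ)
    (hco : dist o c = r) (hvo : ∀ j, j ≠ i → dist o (v j) = r) :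
    r < dist o (v i) := by
  by_contra h
  push_neg at h
  have hr0 : 0 ≤ r := hco ▸ dist_nonneg
  -- build an affine basis from v
  have hcard : Fintype.card (Fin d) = Module.finrank ℝ (EuclideanSpace ℝ (Fin (d - 1))) + 1 := by
    simp [finrank_euclideanSpace]
    omega
  have htop : affineSpan ℝ (Set.range v) = ⊤ :=
    hv.affineSpan_eq_top_iff_card_eq_finrank_add_one.mpr hcard
  let b : AffineBasis (Fin d) ℝ (EuclideanSpace ℝ (Fin (d - 1))) := ⟨v, hv, htop⟩
  set w : Fin d → ℝ := fun j => b.coord j c with hw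
  have hpos : ∀ j, 0 < w j := by
    have := b.interior_convexHull
    rw [show Set.range ⇑b = Set.range v from rfl] at this
    rw [this] at hc
    exact hc
  have hsum : ∑ j, w j = 1 := b.sum_coord_apply_eq_one c
  have hcc : ∑ j, w j • v j = c := by
    have := b.affineCombination_coord_eq_self c
    rwa [Finset.univ.affineCombination_eq_linear_combination _ _ hsum] at this
  -- vector identity: ∑ wⱼ • (vⱼ - c) = 0
  have hvec : ∑ j, w j • (v j - c) = (0 : EuclideanSpace ℝ (Fin (d - 1))) := by
    simp only [smul_sub]
    rw [Finset.sum_sub_distrib, hcc, ← Finset.sum_smul, hsum, one_smul, sub_self]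
  have hinner0 : ∑ j, w j * ⟪v j - c, c - o⟫ = 0 := by
    have h0 : ⟪∑ j, w j • (v j - c), c - o⟫ = 0 := by rw [hvec]; simp
    rw [sum_inner] at h0
    simpa only [real_inner_smul_left] using h0
  have hcr : ‖c - o‖ = r := by rw [← dist_eq_norm, dist_comm]; exact hco
  -- expansion of each term
  have expand : ∀ j, ‖v j - o‖ ^ 2 = ‖v j - c‖ ^ 2 + 2 * ⟪v j - c, c - o⟫ + r ^ 2 := by
    intro j
    have hde : v j - o = (v j - c) + (c - o) := by abel
    rw [hde, ← hcr, norm_add_sq_real]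
  have key : ∑ j, w j * ‖v j - o‖ ^ 2 = (∑ j, w j * ‖v j - c‖ ^ 2) + r ^ 2 := by
    calc ∑ j, w j * ‖v j - o‖ ^ 2
        = ∑ j, (w j * ‖v j - c‖ ^ 2 + 2 * (w j * ⟪v j - c, c - o⟫) + w j * r ^ 2) := by
          refine Finset.sum_congr rfl fun j _ => ?_
          rw [expand j]; ring
      _ = (∑ j, w j * ‖v j - c‖ ^ 2) + 2 * (∑ j, w j * ⟪v j - c, c - o⟫)
            + (∑ j, w j) * r ^ 2 := by
          rw [Finset.sum_add_distrib, Finset.sum_add_distrib, ← Finset.mul_sum,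
            Finset.sum_mul]
      _ = (∑ j, w j * ‖v j - c‖ ^ 2) + r ^ 2 := by rw [hinner0, hsum]; ring
  -- each ‖v j - o‖ ≤ r
  have hle : ∀ j, ‖v j - o‖ ≤ r := by
    intro j
    rw [← dist_eq_norm, dist_comm]
    rcases eq_or_ne j i with rfl | hj
    · exact h
    · exact le_of_eq (hvo j hj)
  have hsumle : ∑ j, w j * ‖v j - o‖ ^ 2 ≤ r ^ 2 := by
    calc ∑ j, w j * ‖v j - o‖ ^ 2 ≤ ∑ j, w j * r ^ 2 := by
          refine Finset.sum_le_sum fun j _ => ?_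
          exact mul_le_mul_of_nonneg_left
            (pow_le_pow_left₀ (norm_nonneg _) (hle j) 2) (hpos j).le
      _ = r ^ 2 := by rw [← Finset.sum_mul, hsum, one_mul]
  have hvar : ∑ j, w j * ‖v j - c‖ ^ 2 ≤ 0 := by linarith [key ▸ hsumle]
  -- hence each v j = c
  have hall : ∀ j, v j = c := by
    intro j
    have hterm : ∀ k ∈ Finset.univ, (0:ℝ) ≤ w k * ‖v k - c‖ ^ 2 := fun k _ =>
      mul_nonneg (hpos k).le (by positivity)
    have hz : w j * ‖v j - c‖ ^ 2 = 0 := by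
      have hsum0 : ∑ k, w k * ‖v k - c‖ ^ 2 = 0 :=
        le_antisymm hvar (Finset.sum_nonneg hterm)
      exact (Finset.sum_eq_zero_iff_of_nonneg hterm).mp hsum0 j (Finset.mem_univ j)
    have : ‖v j - c‖ ^ 2 = 0 := by
      rcases mul_eq_zero.mp hz with h' | h'
      · exact absurd h' (hpos j).ne'
      · exact h'
    have : v j - c = 0 := by
      rwa [pow_eq_zero_iff (by norm_num : 2 ≠ 0), norm_eq_zero] at this
    exact sub_eq_zero.mp this
  -- contradiction with injectivity
  have h01 : (⟨0, by omega⟩ : Fin d) = ⟨1, by omega⟩ :=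
    hv.injective (by rw [hall, hall])
  simp [Fin.ext_iff] at h01
end

section
/- Stereographic projection preserves the circumsphere/hyperplane correspondence: for the unit sphere S^{d−1} ⊂ ℝ^d with north pole N = e_d, the extended stereographic map ι(x) = N + 2(x−N)/‖x−N‖² maps the equator hyperplane {x : x_d = 0} bijectively onto S^{d−1} \ {N}, and a point w of the equator hyperplane lies on (respectively strictly inside) a sphere C contained in that hyperplane if and only if ι(w) lies on (respectively strictly on one fixed side of) the affine hyperplane of ℝ^d spanned by ι(C). -/
open RealInnerProductSpace


variable {E : Type*} [NormedAddCommGroup E] [InnerProductSpace ℝ E]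

noncomputable def spr (N : E) : E → E := fun x => N + (2 / ‖x - N‖ ^ 2) • (x - N)

lemma spr_sub (N x : E) : spr N x - N = (2 / ‖x - N‖ ^ 2) • (x - N) := by
  simp [spr]

lemma spr_invol (N : E) {x : E} (hx : x ≠ N) : spr N (spr N x) = x := by
  have h : ‖x - N‖ ≠ 0 := by simpa [sub_eq_zero] using hx
  have h2 : spr N x - N = (2 / ‖x - N‖ ^ 2) • (x - N) := spr_sub N x
  have h3 : ‖spr N x - N‖ ^ 2 = 4 / ‖x - N‖ ^ 2 := by
    rw [h2, norm_smul, mul_pow, Real.norm_eq_abs, sq_abs]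
    field_simp
    ring
  rw [spr, h3, h2]
  rw [smul_smul]
  have : 2 / (4 / ‖x - N‖ ^ 2) * (2 / ‖x - N‖ ^ 2) = 1 := by field_simp; ring
  rw [this, one_smul]
  abel

lemma equator_ne (N : E) (hN : ‖N‖ = 1) {w : E} (hw : ⟪N, w⟫ = 0) : w ≠ N := by
  intro h
  rw [h, real_inner_self_eq_norm_sq, hN] at hw
  norm_num at hw

lemma norm_sub_N_sq (N : E) (hN : ‖N‖ = 1) {w : E} (hw : ⟪N, w⟫ = 0) :
    ‖w - N‖ ^ 2 = ‖w‖ ^ 2 + 1 := by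
  have := norm_sub_sq_real w N
  rw [real_inner_comm] at this
  rw [this, hw, hN]; ring

lemma norm_spr (N : E) (hN : ‖N‖ = 1) {w : E} (hw : ⟪N, w⟫ = 0) : ‖spr N w‖ = 1 := by
  have hs : ‖w - N‖ ^ 2 = ‖w‖ ^ 2 + 1 := norm_sub_N_sq N hN hw
  have hspos : (0:ℝ) < ‖w‖ ^ 2 + 1 := by positivity
  have h1 : ‖spr N w‖ ^ 2 = 1 := by
    rw [spr, norm_add_sq_real, hN, inner_smul_right, norm_smul, mul_pow,
      Real.norm_eq_abs, sq_abs, inner_sub_right, hw, real_inner_self_eq_norm_sq, hN, hs]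
    field_simp
    ring
  nlinarith [norm_nonneg (spr N w)]

lemma spr_ne_N (N : E) (hN : ‖N‖ = 1) {w : E} (hw : ⟪N, w⟫ = 0) : spr N w ≠ N := by
  intro h
  have h2 := spr_sub N w
  rw [h, sub_self] at h2
  have hwN : w ≠ N := equator_ne N hN hw
  have hne : ‖w - N‖ ≠ 0 := by simpa [sub_eq_zero] using hwN
  have : (2 / ‖w - N‖ ^ 2) ≠ 0 := by positivity
  have := smul_eq_zero.mp h2.symm
  rcases this with h' | h'
  · exact ‹(2 / ‖w - N‖ ^ 2) ≠ 0› h'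
  · exact hwN (sub_eq_zero.mp h')

lemma inner_N_spr (N : E) (hN : ‖N‖ = 1) {y : E} (hy : ‖y‖ = 1) (hyN : y ≠ N) :
    ⟪N, spr N y⟫ = 0 := by
  have hs : ‖y - N‖ ^ 2 = 2 - 2 * ⟪N, y⟫ := by
    have := norm_sub_sq_real y N
    rw [real_inner_comm] at this
    rw [this, hy, hN]; ring
  have hne : ‖y - N‖ ≠ 0 := by simpa [sub_eq_zero] using hyN
  have hne2 : ‖y - N‖ ^ 2 ≠ 0 := pow_ne_zero 2 hne
  rw [spr, inner_add_right, inner_smul_right, inner_sub_right,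
    real_inner_self_eq_norm_sq, hN, hs]
  rw [hs] at hne2
  field_simp
  have h1 : (1:ℝ) - ⟪N, y⟫ ≠ 0 := fun h => hne2 (by linarith)
  linear_combination (-1:ℝ) * mul_inv_cancel₀ h1

lemma spr_key (N c₀ w : E) (hN : ‖N‖ = 1) (hc : ⟪N, c₀⟫ = 0) (hw : ⟪N, w⟫ = 0) (r : ℝ) :
    (‖w‖ ^ 2 + 1) * (⟪c₀ + ((‖c₀‖ ^ 2 - r ^ 2 - 1) / 2) • N, spr N w⟫ -
      ((‖c₀‖ ^ 2 - r ^ 2 - 1) / 2 + 1)) = r ^ 2 - ‖w - c₀‖ ^ 2 := by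
  have hs : ‖w - N‖ ^ 2 = ‖w‖ ^ 2 + 1 := norm_sub_N_sq N hN hw
  have hspos : (0:ℝ) < ‖w‖ ^ 2 + 1 := by positivity
  have hwc : ‖w - c₀‖ ^ 2 = ‖w‖ ^ 2 - 2 * ⟪w, c₀⟫ + ‖c₀‖ ^ 2 := by
    rw [norm_sub_sq_real]
  have hcN : ⟪c₀, N⟫ = 0 := by rw [real_inner_comm]; exact hc
  have hcw : ⟪c₀, w⟫ = ⟪w, c₀⟫ := real_inner_comm _ _
  simp only [hwc, spr, inner_add_right, inner_add_left, inner_smul_right, inner_smul_left,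
    inner_sub_right, real_inner_self_eq_norm_sq, conj_trivial, hN, hcN, hw, hc, hs, hcw]
  field_simp
  ring

def hyperplane (v : E) (a : ℝ) : AffineSubspace ℝ E where
  carrier := {y | ⟪v, y⟫ = a}
  smul_vsub_vadd_mem' t p q z hp hq hz := by
    simp only [Set.mem_setOf_eq] at *
    simp [vsub_eq_sub, vadd_eq_add, inner_add_right, inner_sub_right, inner_smul_right,
      hp, hq, hz]

lemma span_sphere_cap (v : E) (a : ℝ) (hv : v ≠ 0) (S : Set E)
    (hS : S = {y | ⟪v, y⟫ = a} ∩ Metric.sphere 0 1)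
    (p₀ p₁ : E) (hp₀ : p₀ ∈ S) (hp₁ : p₁ ∈ S) (hne : p₀ ≠ p₁) :
    (affineSpan ℝ S : Set E) = {y | ⟪v, y⟫ = a} := by
  have hvn : ‖v‖ ≠ 0 := by simpa using hv
  set m : E := (a / ‖v‖ ^ 2) • v with hm
  have hmv : ⟪v, m⟫ = a := by
    rw [hm, inner_smul_right, real_inner_self_eq_norm_sq]
    field_simp
  have horth : ∀ z : E, ⟪v, z⟫ = a → ⟪z - m, m⟫ = 0 := by
    intro z hz
    have h1 : ⟪z - m, m⟫ = (a / ‖v‖ ^ 2) * (⟪v, z⟫ - (a / ‖v‖ ^ 2) * ⟪v, v⟫) := by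
      rw [hm, real_inner_smul_right, inner_sub_left, real_inner_smul_left,
        real_inner_comm z v]
    rw [h1, hz, real_inner_self_eq_norm_sq]
    field_simp
    ring
  have hnorm : ∀ z : E, ⟪v, z⟫ = a → ‖z‖ ^ 2 = ‖z - m‖ ^ 2 + ‖m‖ ^ 2 := by
    intro z hz
    have h1 := norm_add_sq_real (z - m) m
    rw [sub_add_cancel, horth z hz] at h1
    rw [h1]; ring
  have hmemS : ∀ z : E, z ∈ S ↔ ⟪v, z⟫ = a ∧ ‖z - m‖ ^ 2 = 1 - ‖m‖ ^ 2 := by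
    intro z
    rw [hS]
    constructor
    · rintro ⟨h1, h2⟩
      rw [Set.mem_setOf_eq] at h1
      rw [mem_sphere_zero_iff_norm] at h2
      refine ⟨h1, ?_⟩
      have := hnorm z h1
      rw [h2] at this
      linarith
    · rintro ⟨h1, h2⟩
      refine ⟨h1, ?_⟩
      rw [mem_sphere_zero_iff_norm]
      have hz := hnorm z h1
      rw [h2] at hz
      have : ‖z‖ ^ 2 = 1 := by linarith
      nlinarith [norm_nonneg z]
  have hρ : 0 < 1 - ‖m‖ ^ 2 := by
    have h0 := ((hmemS p₀).mp hp₀).2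
    have h1 := ((hmemS p₁).mp hp₁).2
    rcases lt_or_eq_of_le (by nlinarith [sq_nonneg ‖p₀ - m‖] : (0:ℝ) ≤ 1 - ‖m‖ ^ 2) with h | h
    · exact h
    · exfalso
      have e0 : p₀ = m := by
        have : ‖p₀ - m‖ ^ 2 = 0 := by linarith
        have : ‖p₀ - m‖ = 0 := by nlinarith [norm_nonneg (p₀ - m)]
        rwa [norm_eq_zero, sub_eq_zero] at this
      have e1 : p₁ = m := by
        have : ‖p₁ - m‖ ^ 2 = 0 := by linarith
        have : ‖p₁ - m‖ = 0 := by nlinarith [norm_nonneg (p₁ - m)]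
        rwa [norm_eq_zero, sub_eq_zero] at this
      exact hne (e0.trans e1.symm)
  have hq0 : (2:ℝ) • m - p₀ ∈ S := by
    rw [hmemS]
    constructor
    · rw [inner_sub_right, inner_smul_right, hmv, ((hmemS p₀).mp hp₀).1]; ring
    · have : (2:ℝ) • m - p₀ - m = -(p₀ - m) := by module
      rw [this, norm_neg]
      exact ((hmemS p₀).mp hp₀).2
  have hmspan : m ∈ affineSpan ℝ S := by
    have h := AffineSubspace.smul_vsub_vadd_mem (affineSpan ℝ S) (2⁻¹ : ℝ)
      (subset_affineSpan ℝ S hq0) (subset_affineSpan ℝ S hp₀) (subset_affineSpan ℝ S hp₀)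
    have he : (2⁻¹ : ℝ) • ((2:ℝ) • m - p₀ -ᵥ p₀) +ᵥ p₀ = m := by
      simp only [vsub_eq_sub, vadd_eq_add]
      module
    rwa [he] at h
  apply Set.Subset.antisymm
  · have hle : affineSpan ℝ S ≤ hyperplane v a := by
      rw [affineSpan_le]
      intro z hz
      exact ((hmemS z).mp hz).1
    exact fun y hy => hle hy
  · intro y hy
    rw [Set.mem_setOf_eq] at hy
    by_cases hym : y = m
    · rw [hym]; exact hmspan
    · have hymn : ‖y - m‖ ≠ 0 := by
        simpa [sub_eq_zero] using hym
      set ρ : ℝ := Real.sqrt (1 - ‖m‖ ^ 2) with hrho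
      have hρpos : 0 < ρ := Real.sqrt_pos.mpr hρ
      have hρsq : ρ ^ 2 = 1 - ‖m‖ ^ 2 := Real.sq_sqrt (le_of_lt hρ)
      set p' : E := m + (ρ * ‖y - m‖⁻¹) • (y - m) with hp'
      have hp'S : p' ∈ S := by
        rw [hmemS]
        constructor
        · rw [hp', inner_add_right, hmv, inner_smul_right, inner_sub_right, hy, hmv]
          ring
        · have h1 : p' - m = (ρ * ‖y - m‖⁻¹) • (y - m) := by rw [hp']; abel
          rw [h1, norm_smul, mul_pow, Real.norm_eq_abs, sq_abs, mul_pow]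
          rw [inv_pow]
          field_simp
          rw [hρsq]
      have hyt : y = (‖y - m‖ / ρ) • (p' -ᵥ m) +ᵥ m := by
        simp only [vsub_eq_sub, vadd_eq_add]
        have h1 : p' - m = (ρ * ‖y - m‖⁻¹) • (y - m) := by rw [hp']; abel
        rw [h1, smul_smul]
        have : ‖y - m‖ / ρ * (ρ * ‖y - m‖⁻¹) = 1 := by
          field_simp
        rw [this, one_smul]
        abel
      rw [hyt]
      exact AffineSubspace.smul_vsub_vadd_mem _ _ (subset_affineSpan ℝ S hp'S) hmspan hmspan

set_option maxHeartbeats 1000000 in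
/-- Stereographic projection preserves the circumsphere/hyperplane correspondence.
For the unit sphere in `ℝ^{n+1}` with north pole `N = e_{n+1}`, the inversion
`ι(x) = N + 2(x−N)/‖x−N‖²` maps the equator hyperplane `{x : x_{n+1} = 0}` bijectively
onto the unit sphere minus `N`; moreover for every `(n−1)`-sphere `C` inside the equator
hyperplane (center `c₀` in the hyperplane, radius `r > 0`) there are `v ≠ 0` and `a`
defining an affine hyperplane `H = {y : ⟪v, y⟫ = a}` not containing `N` such that `H` is
the affine span of `ι(C)`, and a point `w` of the equator hyperplane lies on `C` iff
`ι(w) ∈ H`, and strictly inside `C` iff `ι(w)` is on the open side of `H` not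
containing `N`. -/
theorem stereographic_projection_correspondence
    (n : ℕ) (hn : 1 ≤ n) :
    let E := EuclideanSpace ℝ (Fin (n + 1))
    let N : E := EuclideanSpace.single (Fin.last n) 1
    let P : Set E := {x | x (Fin.last n) = 0}
    let ι : E → E := fun x => N + (2 / ‖x - N‖ ^ 2) • (x - N)
    Set.BijOn ι P (Metric.sphere (0 : E) 1 \ {N}) ∧
    ∀ c₀ ∈ P, ∀ r : ℝ, 0 < r →
      ∃ (v : E) (a : ℝ), v ≠ 0 ∧ ⟪v, N⟫ < a ∧
        (affineSpan ℝ (ι '' {y ∈ P | dist y c₀ = r}) : Set E) = {y | ⟪v, y⟫ = a} ∧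
        (∀ w ∈ P, (dist w c₀ = r ↔ ⟪v, ι w⟫ = a)) ∧
        (∀ w ∈ P, (dist w c₀ < r ↔ a < ⟪v, ι w⟫)) := by

  intro E N P ι
  have hι : ι = spr N := rfl
  have hNn : ‖N‖ = 1 := by
    have h : N = EuclideanSpace.single (Fin.last n) (1:ℝ) := rfl
    rw [h, EuclideanSpace.norm_single]; norm_num
  have hPmem : ∀ x : E, x ∈ P ↔ ⟪N, x⟫ = 0 := by
    intro x
    have h : ⟪N, x⟫ = x (Fin.last n) := by
      have hN : N = EuclideanSpace.single (Fin.last n) (1:ℝ) := rfl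
      rw [hN, EuclideanSpace.inner_single_left]; simp
    exact ⟨fun hx => by rw [h]; exact hx, fun hx => by rw [h] at hx; exact hx⟩
  constructor
  · refine ⟨?_, ?_, ?_⟩
    · intro w hw
      have hw' := (hPmem w).1 hw
      refine ⟨?_, ?_⟩
      · rw [mem_sphere_zero_iff_norm, hι]
        exact norm_spr N hNn hw'
      · simp only [Set.mem_singleton_iff]
        rw [hι]
        exact spr_ne_N N hNn hw'
    · intro w₁ h₁ w₂ h₂ heq
      rw [hι] at heq
      have e₁ : spr N (spr N w₁) = w₁ := spr_invol N (equator_ne N hNn ((hPmem w₁).1 h₁))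
      have e₂ : spr N (spr N w₂) = w₂ := spr_invol N (equator_ne N hNn ((hPmem w₂).1 h₂))
      rw [← e₁, heq, e₂]
    · intro y hy
      obtain ⟨hys, hyN⟩ := hy
      rw [mem_sphere_zero_iff_norm] at hys
      simp only [Set.mem_singleton_iff] at hyN
      refine ⟨spr N y, (hPmem _).2 (inner_N_spr N hNn hys hyN), ?_⟩
      rw [hι]
      exact spr_invol N hyN
  · intro c₀ hc₀ r hr
    have hc : ⟪N, c₀⟫ = 0 := (hPmem c₀).1 hc₀
    set k : ℝ := (‖c₀‖ ^ 2 - r ^ 2 - 1) / 2 with hk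
    set v : E := c₀ + k • N with hv
    set a : ℝ := k + 1 with ha
    have hcN : ⟪c₀, N⟫ = 0 := by rw [real_inner_comm]; exact hc
    have hvN : ⟪v, N⟫ = k := by
      rw [hv, inner_add_left, real_inner_smul_left, hcN, real_inner_self_eq_norm_sq, hNn]
      norm_num
    have hvne : v ≠ 0 := by
      intro h
      have h2 : ⟪v, N⟫ = 0 := by rw [h, inner_zero_left]
      rw [hvN] at h2
      have hc0 : c₀ = 0 := by
        have h3 := hv
        rw [h2, zero_smul, add_zero] at h3
        rw [← h3, h]
      rw [hc0, norm_zero] at hk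
      rw [hk] at h2
      nlinarith
    have key : ∀ w : E, ⟪N, w⟫ = 0 →
        (‖w‖ ^ 2 + 1) * (⟪v, spr N w⟫ - a) = r ^ 2 - ‖w - c₀‖ ^ 2 := by
      intro w hw
      have h := spr_key N c₀ w hNn hc hw r
      rw [← hk, ← hv, ← ha] at h
      exact h
    have hiff_on : ∀ w ∈ P, dist w c₀ = r ↔ ⟪v, ι w⟫ = a := by
      intro w hw
      have hw' := (hPmem w).1 hw
      have hkey := key w hw'
      have hs : (0:ℝ) < ‖w‖ ^ 2 + 1 := by positivity
      rw [dist_eq_norm, hι]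
      constructor
      · intro h
        have h0 : (‖w‖ ^ 2 + 1) * (⟪v, spr N w⟫ - a) = 0 := by rw [hkey, h]; ring
        rcases mul_eq_zero.mp h0 with h' | h'
        · linarith
        · linarith [sub_eq_zero.mp h']
      · intro h
        rw [h, sub_self, mul_zero] at hkey
        have h1 : ‖w - c₀‖ ^ 2 = r ^ 2 := by linarith
        rw [← Real.sqrt_sq (norm_nonneg (w - c₀)), h1, Real.sqrt_sq hr.le]
    have hiff_lt : ∀ w ∈ P, dist w c₀ < r ↔ a < ⟪v, ι w⟫ := by
      intro w hw
      have hw' := (hPmem w).1 hw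
      have hkey := key w hw'
      have hs : (0:ℝ) < ‖w‖ ^ 2 + 1 := by positivity
      rw [dist_eq_norm, hι]
      constructor
      · intro h
        have h2 : ‖w - c₀‖ ^ 2 < r ^ 2 := by nlinarith [norm_nonneg (w - c₀)]
        nlinarith
      · intro h
        have h2 : ‖w - c₀‖ ^ 2 < r ^ 2 := by nlinarith
        nlinarith [norm_nonneg (w - c₀)]
    refine ⟨v, a, hvne, by rw [hvN, ha]; linarith, ?_, hiff_on, hiff_lt⟩
    -- the affine span statement
    have hS : ι '' {y ∈ P | dist y c₀ = r} = {y | ⟪v, y⟫ = a} ∩ Metric.sphere 0 1 := by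
      ext y
      constructor
      · rintro ⟨w, ⟨hwP, hwd⟩, rfl⟩
        refine ⟨(hiff_on w hwP).1 hwd, ?_⟩
        rw [mem_sphere_zero_iff_norm, hι]
        exact norm_spr N hNn ((hPmem w).1 hwP)
      · rintro ⟨hy1, hy2⟩
        rw [Set.mem_setOf_eq] at hy1
        rw [mem_sphere_zero_iff_norm] at hy2
        have hyN : y ≠ N := by
          intro h
          rw [h, hvN] at hy1
          rw [ha] at hy1
          linarith
        have hmem : spr N y ∈ P := (hPmem _).2 (inner_N_spr N hNn hy2 hyN)
        refine ⟨spr N y, ⟨hmem, ?_⟩, by rw [hι]; exact spr_invol N hyN⟩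
        apply (hiff_on (spr N y) hmem).2
        rw [hι, spr_invol N hyN]
        exact hy1
    -- two distinct points on the image
    have hzero : (0 : Fin (n + 1)) ≠ Fin.last n := by
      simp only [Fin.ne_iff_vne, Fin.val_zero, Fin.val_last]
      omega
    set e : E := EuclideanSpace.single (0 : Fin (n + 1)) (1:ℝ) with he
    have hNe : ⟪N, e⟫ = 0 := by
      have hN : N = EuclideanSpace.single (Fin.last n) (1:ℝ) := rfl
      rw [hN, he, EuclideanSpace.inner_single_left]
      simp only [EuclideanSpace.single_apply]
      rw [if_neg (Ne.symm hzero)]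
      simp
    have hene : ‖e‖ = 1 := by rw [he, EuclideanSpace.norm_single]; norm_num
    have hw₀ : ⟪N, c₀ + r • e⟫ = 0 := by
      rw [inner_add_right, hc, inner_smul_right, hNe]; ring
    have hw₁ : ⟪N, c₀ - r • e⟫ = 0 := by
      rw [inner_sub_right, hc, inner_smul_right, hNe]; ring
    have hd₀ : dist (c₀ + r • e) c₀ = r := by
      rw [dist_eq_norm]
      simp only [add_sub_cancel_left]
      rw [norm_smul, hene, Real.norm_eq_abs, abs_of_pos hr, mul_one]
    have hd₁ : dist (c₀ - r • e) c₀ = r := by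
      rw [dist_eq_norm]
      simp only [sub_sub_cancel_left]
      rw [norm_neg, norm_smul, hene, Real.norm_eq_abs, abs_of_pos hr, mul_one]
    have hp₀ : ι (c₀ + r • e) ∈ ι '' {y ∈ P | dist y c₀ = r} :=
      ⟨_, ⟨(hPmem _).2 hw₀, hd₀⟩, rfl⟩
    have hp₁ : ι (c₀ - r • e) ∈ ι '' {y ∈ P | dist y c₀ = r} :=
      ⟨_, ⟨(hPmem _).2 hw₁, hd₁⟩, rfl⟩
    have hpne : ι (c₀ + r • e) ≠ ι (c₀ - r • e) := by
      intro h
      rw [hι] at h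
      have e₁ := spr_invol N (equator_ne N hNn hw₀)
      have e₂ := spr_invol N (equator_ne N hNn hw₁)
      have : c₀ + r • e = c₀ - r • e := by rw [← e₁, h, e₂]
      have h2 : (2 * r) • e = 0 := by
        have := sub_eq_zero.mpr this
        rw [show c₀ + r • e - (c₀ - r • e) = (2 * r) • e by module] at this
        exact this
      rcases smul_eq_zero.mp h2 with h' | h'
      · linarith
      · rw [h'] at hene
        simp at hene
    exact span_sphere_cap v a hvne _ hS _ _ hp₀ hp₁ hpne
end

section
/- Two complementary affine spans through an interior point meet in a line: let σ = conv{v₁,…,v_d} be a (d−1)-simplex in ℝ^{d−1} and c an interior point; for 1 ≤ k < d set E_F = aff({v₁,…,v_k} ∪ {c}) and E_G = aff({v_{k+1},…,v_d} ∪ {c}). Then E_F ∩ E_G is an affine line through c, and this line meets conv{v₁,…,v_k} and conv{v_{k+1},…,v_d} in (relatively interior) points. -/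
open Set AffineSubspace


section Aux

lemma sum_dite_subtype' {d : ℕ} {M : Type*} [AddCommMonoid M]
    (P : Fin d → Prop) [DecidablePred P] (g : {i : Fin d // P i} → M) :
    ∑ j : Fin d, (if h : P j then g ⟨j, h⟩ else 0) = ∑ i : {i : Fin d // P i}, g i := by
  rw [show (∑ i : {i : Fin d // P i}, g i)
      = ∑ j ∈ Finset.univ.filter P, (if h : P j then g ⟨j, h⟩ else 0) from ?_]
  · rw [Finset.sum_filter]
    apply Finset.sum_congr rfl
    intro j _
    by_cases h : P j <;> simp [h]
  · apply Finset.sum_bij (fun (i : {i : Fin d // P i}) _ => (i : Fin d))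
    · intro a _; simp [a.2]
    · intro a _ b _ h; exact Subtype.ext h
    · intro b hb; exact ⟨⟨b, (Finset.mem_filter.mp hb).2⟩, Finset.mem_univ _, rfl⟩
    · intro a _; simp [a.2]

lemma sum_subtype_eq_sum_filter' {d : ℕ} {M : Type*} [AddCommMonoid M]
    (P : Fin d → Prop) [DecidablePred P] (f : Fin d → M) :
    ∑ i : {i : Fin d // P i}, f i.1 = ∑ j ∈ Finset.univ.filter P, f j := by
  rw [← sum_dite_subtype' P (fun i => f i.1), Finset.sum_filter]
  apply Finset.sum_congr rfl
  intro j _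
  by_cases h : P j <;> simp [h]

lemma indep_aux {d : ℕ} {E : Type*} [AddCommGroup E] [Module ℝ E]
    (v : Fin d → E) (hv : AffineIndependent ℝ v)
    (lam : Fin d → ℝ) (hsum : ∑ i, lam i = 1)
    (P : Fin d → Prop) [DecidablePred P] (hnP : ∃ i, ¬ P i) (hlam : ∀ i, ¬ P i → lam i ≠ 0) :
    AffineIndependent ℝ
      (fun o : Option {i : Fin d // P i} => o.elim (∑ i, lam i • v i) (fun i => v i.1)) := by
  rw [affineIndependent_iff_of_fintype] at hv ⊢
  intro w hw0 hwsum
  rw [Finset.weightedVSub_eq_linear_combination _ hw0] at hwsum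
  set W : Fin d → ℝ := fun j => (if h : P j then w (some ⟨j, h⟩) else 0) + w none * lam j with hWdef
  have hWsum : ∑ j, W j = 0 := by
    rw [hWdef]
    simp only [Finset.sum_add_distrib, ← Finset.mul_sum, hsum, mul_one]
    rw [sum_dite_subtype' P (fun i => w (some i))]
    rw [Fintype.sum_option] at hw0
    linarith [hw0]
  have hWcomb : (Finset.univ.weightedVSub v) W = 0 := by
    rw [Finset.weightedVSub_eq_linear_combination _ hWsum, hWdef]
    simp only [add_smul, Finset.sum_add_distrib, mul_smul]
    have h1 : ∑ x : Fin d, (if h : P x then w (some ⟨x, h⟩) else 0) • v x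
        = ∑ i : {i : Fin d // P i}, w (some i) • v i.1 := by
      rw [← sum_dite_subtype' P (fun i => w (some i) • v i.1)]
      apply Finset.sum_congr rfl
      intro j _
      by_cases h : P j <;> simp [h]
    have h2 : ∑ x : Fin d, w none • lam x • v x = w none • ∑ i, lam i • v i := by
      rw [Finset.smul_sum]
    rw [h1, h2]
    rw [Fintype.sum_option] at hwsum
    simp only [Option.elim_none, Option.elim_some] at hwsum
    rw [add_comm]
    exact hwsum
  have hW0 : ∀ j, W j = 0 := hv W hWsum hWcomb
  have hnone : w none = 0 := by
    obtain ⟨j, hj⟩ := hnP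
    have := hW0 j
    rw [hWdef] at this
    simp only [hj, dif_neg, not_false_iff, zero_add] at this
    exact (mul_eq_zero.mp this).resolve_right (hlam j hj)
  intro o
  match o with
  | none => exact hnone
  | some i =>
    have := hW0 i.1
    rw [hWdef] at this
    simp only [hnone, zero_mul, add_zero, i.2, dif_pos] at this
    exact this

lemma mem_intrinsicInterior_of_pos {E : Type*} [NormedAddCommGroup E] [NormedSpace ℝ E]
    [FiniteDimensional ℝ E] {ι : Type*} [Fintype ι] [Nonempty ι] (w : ι → E)
    (hw : AffineIndependent ℝ w) (μ : ι → ℝ) (hμ : ∀ i, 0 < μ i) (hs : ∑ i, μ i = 1) :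
    ∑ i, μ i • w i ∈ intrinsicInterior ℝ (convexHull ℝ (Set.range w)) := by
  obtain ⟨i₀⟩ := ‹Nonempty ι›
  set D := vectorSpan ℝ (Set.range w) with hD
  let φ : D →ᵃⁱ[ℝ] E :=
    (AffineIsometryEquiv.constVAdd ℝ E (w i₀)).toAffineIsometry.comp
      D.subtypeₗᵢ.toAffineIsometry
  have hφ : ∀ z : D, φ z = w i₀ + (z : E) := fun z => rfl
  let u : ι → D := fun i => ⟨w i - w i₀,
    vsub_mem_vectorSpan ℝ (mem_range_self i) (mem_range_self i₀)⟩
  have hcomp : ⇑φ ∘ u = w := by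
    funext i; simp [hφ, u]
  have hu : AffineIndependent ℝ u := by
    apply AffineIndependent.of_comp (f := φ.toAffineMap)
    rwa [show ⇑φ.toAffineMap ∘ u = w from hcomp]
  have hrank : Module.finrank ℝ D = Fintype.card ι - 1 :=
    hw.finrank_vectorSpan (n := Fintype.card ι - 1)
      (by have := Fintype.card_pos (α := ι); omega)
  have htop : affineSpan ℝ (Set.range u) = ⊤ := by
    rw [hu.affineSpan_eq_top_iff_card_eq_finrank_add_one]
    have := Fintype.card_pos (α := ι); omega
  let b : AffineBasis ι ℝ D := ⟨u, hu, htop⟩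
  set x' : D := Finset.univ.affineCombination ℝ u μ with hx'
  have hint : x' ∈ interior (convexHull ℝ (Set.range u)) := by
    rw [show Set.range u = Set.range ⇑b from rfl, b.interior_convexHull]
    intro i
    rw [show x' = Finset.univ.affineCombination ℝ ⇑b μ from rfl,
      b.coord_apply_combination_of_mem (Finset.mem_univ i) hs]
    exact hμ i
  have himg : convexHull ℝ (Set.range w) = ⇑φ '' (convexHull ℝ (Set.range u)) := by
    rw [← φ.coe_toAffineMap, AffineMap.image_convexHull (f := φ.toAffineMap)]
    congr 1
    rw [show ⇑φ.toAffineMap '' Set.range u = Set.range (⇑φ ∘ u) from (Set.range_comp _ _).symm,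
      hcomp]
  rw [himg, φ.image_intrinsicInterior]
  refine ⟨x', interior_subset_intrinsicInterior (𝕜 := ℝ) hint, ?_⟩
  rw [hx', ← φ.coe_toAffineMap,
    show φ.toAffineMap ((Finset.affineCombination ℝ Finset.univ u) μ)
      = (Finset.affineCombination ℝ Finset.univ (⇑φ.toAffineMap ∘ u)) μ from
      Finset.map_affineCombination _ _ _ hs φ.toAffineMap,
    show ⇑φ.toAffineMap ∘ u = w from hcomp,
    Finset.affineCombination_eq_linear_combination _ _ _ hs]

end Aux




/-- Two complementary affine spans through an interior point meet in a line: let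
`σ = conv{v 1, …, v d}` be a `(d−1)`-simplex in `ℝ^{d−1}` with interior point
`c = Σ λᵢ vᵢ` (all `λᵢ > 0`, `Σ λᵢ = 1`), and `1 ≤ k < d`. Set
`E_F = aff({vᵢ : i < k} ∪ {c})` and `E_G = aff({vᵢ : i ≥ k} ∪ {c})`. Then
`dim E_F = k`, `dim E_G = d − k`, their intersection is an affine line through `c`,
and this line contains the points `x̄` and `ȳ` which are relatively interior points of
`conv{vᵢ : i < k}` and `conv{vᵢ : i ≥ k}` respectively. -/
theorem complementary_spans_meet_in_line
    (d k : ℕ) (hk : 1 ≤ k) (hkd : k < d)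
    (v : Fin d → EuclideanSpace ℝ (Fin (d - 1)))
    (hv : AffineIndependent ℝ v)
    (lam : Fin d → ℝ) (hpos : ∀ i, 0 < lam i) (hsum : ∑ i, lam i = 1) :
    let c := ∑ i, lam i • v i
    let VF : Set (EuclideanSpace ℝ (Fin (d - 1))) := {p | ∃ i : Fin d, (i : ℕ) < k ∧ p = v i}
    let VG : Set (EuclideanSpace ℝ (Fin (d - 1))) := {p | ∃ i : Fin d, k ≤ (i : ℕ) ∧ p = v i}
    let EF := affineSpan ℝ (VF ∪ {c})
    let EG := affineSpan ℝ (VG ∪ {c})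
    let xbar := (∑ i ∈ Finset.univ.filter fun i : Fin d => (i : ℕ) < k, lam i)⁻¹ •
      ∑ i ∈ Finset.univ.filter fun i : Fin d => (i : ℕ) < k, lam i • v i
    let ybar := (∑ i ∈ Finset.univ.filter fun i : Fin d => k ≤ (i : ℕ), lam i)⁻¹ •
      ∑ i ∈ Finset.univ.filter fun i : Fin d => k ≤ (i : ℕ), lam i • v i
    Module.finrank ℝ EF.direction = k ∧
    Module.finrank ℝ EG.direction = d - k ∧
    Module.finrank ℝ (EF ⊓ EG).direction = 1 ∧
    c ∈ EF ⊓ EG ∧ xbar ∈ EF ⊓ EG ∧ ybar ∈ EF ⊓ EG ∧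
    xbar ∈ intrinsicInterior ℝ (convexHull ℝ VF) ∧
    ybar ∈ intrinsicInterior ℝ (convexHull ℝ VG) := by
  intro c VF VG EF EG xbar ybar
  have hd : 0 < d := lt_trans (lt_of_lt_of_le Nat.zero_lt_one hk) hkd
  set P : Fin d → Prop := fun i => (i : ℕ) < k with hPdef
  set Q : Fin d → Prop := fun i => k ≤ (i : ℕ) with hQdef
  -- basic index facts
  have hPn : ∃ i : Fin d, ¬ P i := ⟨⟨k, hkd⟩, by simp [hPdef]⟩
  have hQn : ∃ i : Fin d, ¬ Q i := ⟨⟨0, hd⟩, by simp [hQdef]; omega⟩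
  haveI : Nonempty {i : Fin d // P i} := ⟨⟨⟨0, hd⟩, by simp [hPdef]; omega⟩⟩
  haveI : Nonempty {i : Fin d // Q i} := ⟨⟨⟨k, hkd⟩, by simp [hQdef]⟩⟩
  have hcardP : Fintype.card {i : Fin d // P i} = k := by
    rw [Fintype.card_subtype]
    rw [show Finset.univ.filter P = Finset.map (Fin.castLEEmb hkd.le) Finset.univ from ?_]
    · simp
    · ext i
      simp only [Finset.mem_filter, Finset.mem_univ, true_and, Finset.mem_map,
        Fin.castLEEmb_apply]
      constructor
      · intro hi; exact ⟨⟨(i : ℕ), hi⟩, by ext; simp⟩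
      · rintro ⟨j, rfl⟩; simpa [hPdef] using j.2
  have hcardQ : Fintype.card {i : Fin d // Q i} = d - k := by
    have h1 : Fintype.card {i : Fin d // P i} + Fintype.card {i : Fin d // Q i} = d := by
      have hiff : ∀ i : Fin d, Q i ↔ ¬ P i := by intro i; simp [hPdef, hQdef]
      rw [Fintype.card_subtype, Fintype.card_subtype]
      rw [Finset.filter_congr (fun i _ => hiff i)]
      have := Finset.card_filter_add_card_filter_not
        (s := (Finset.univ : Finset (Fin d))) (p := P)
      simpa using this
    omega
  -- the families
  set uF : Option {i : Fin d // P i} → EuclideanSpace ℝ (Fin (d - 1)) :=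
    fun o => o.elim c (fun i => v i.1) with huFdef
  set uG : Option {i : Fin d // Q i} → EuclideanSpace ℝ (Fin (d - 1)) :=
    fun o => o.elim c (fun i => v i.1) with huGdef
  have hVFmem : ∀ p, p ∈ VF ↔ ∃ i : Fin d, (i : ℕ) < k ∧ p = v i := fun p => Iff.rfl
  have hVGmem : ∀ p, p ∈ VG ↔ ∃ i : Fin d, k ≤ (i : ℕ) ∧ p = v i := fun p => Iff.rfl
  have hrangeF : Set.range uF = VF ∪ {c} := by
    ext p
    simp only [Set.mem_range, Set.mem_union, Set.mem_singleton_iff, huFdef, hVFmem]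
    constructor
    · rintro ⟨o, rfl⟩
      match o with
      | none => right; rfl
      | some i => left; exact ⟨i.1, i.2, rfl⟩
    · rintro (⟨i, hi, rfl⟩ | rfl)
      · exact ⟨some ⟨i, hi⟩, rfl⟩
      · exact ⟨none, rfl⟩
  have hrangeG : Set.range uG = VG ∪ {c} := by
    ext p
    simp only [Set.mem_range, Set.mem_union, Set.mem_singleton_iff, huGdef, hVGmem]
    constructor
    · rintro ⟨o, rfl⟩
      match o with
      | none => right; rfl
      | some i => left; exact ⟨i.1, i.2, rfl⟩
    · rintro (⟨i, hi, rfl⟩ | rfl)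
      · exact ⟨some ⟨i, hi⟩, rfl⟩
      · exact ⟨none, rfl⟩
  have hindF : AffineIndependent ℝ uF :=
    indep_aux v hv lam hsum P hPn (fun i _ => (hpos i).ne')
  have hindG : AffineIndependent ℝ uG :=
    indep_aux v hv lam hsum Q hQn (fun i _ => (hpos i).ne')
  -- dimensions of EF and EG
  have hdimF : Module.finrank ℝ EF.direction = k := by
    show Module.finrank ℝ (affineSpan ℝ (VF ∪ {c})).direction = k
    rw [direction_affineSpan, ← hrangeF]
    exact hindF.finrank_vectorSpan (by simp [hcardP])
  have hdimG : Module.finrank ℝ EG.direction = d - k := by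
    show Module.finrank ℝ (affineSpan ℝ (VG ∪ {c})).direction = d - k
    rw [direction_affineSpan, ← hrangeG]
    exact hindG.finrank_vectorSpan (by simp [hcardQ])
  -- memberships of c
  have hcF : c ∈ EF := subset_affineSpan ℝ _ (Set.mem_union_right _ rfl)
  have hcG : c ∈ EG := subset_affineSpan ℝ _ (Set.mem_union_right _ rfl)
  -- sums
  set s : ℝ := ∑ i ∈ Finset.univ.filter P, lam i with hsdef
  set t : ℝ := ∑ i ∈ Finset.univ.filter Q, lam i with htdef
  have hsQP : Finset.univ.filter Q = Finset.univ.filter (fun i => ¬ P i) := by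
    apply Finset.filter_congr; intro i _; simp [hPdef, hQdef]
  have hst : s + t = 1 := by
    rw [hsdef, htdef, hsQP, Finset.sum_filter_add_sum_filter_not, hsum]
  have hs0 : 0 < s := Finset.sum_pos (fun i _ => hpos i)
    ⟨⟨0, hd⟩, by simp [hPdef]; omega⟩
  have ht0 : 0 < t := Finset.sum_pos (fun i _ => hpos i)
    ⟨⟨k, hkd⟩, by simp [hQdef]⟩
  set A : EuclideanSpace ℝ (Fin (d - 1)) := ∑ i ∈ Finset.univ.filter P, lam i • v i with hAdef
  set B : EuclideanSpace ℝ (Fin (d - 1)) := ∑ i ∈ Finset.univ.filter Q, lam i • v i with hBdef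
  have hxbar : xbar = s⁻¹ • A := rfl
  have hybar : ybar = t⁻¹ • B := rfl
  have hAB : A + B = c := by
    rw [hAdef, hBdef, hsQP, Finset.sum_filter_add_sum_filter_not]
  have hsx : s • xbar = A := by rw [hxbar, smul_inv_smul₀ hs0.ne']
  have hty : t • ybar = B := by rw [hybar, smul_inv_smul₀ ht0.ne']
  have hc_eq : c = s • xbar + t • ybar := by rw [hsx, hty, hAB]
  -- xbar ∈ intrinsic interior of conv VF
  have hxint : xbar ∈ intrinsicInterior ℝ (convexHull ℝ VF) := by
    have hrw : VF = Set.range (fun i : {i : Fin d // P i} => v i.1) := by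
      ext p
      simp only [Set.mem_range, hVFmem]
      constructor
      · rintro ⟨i, hi, rfl⟩; exact ⟨⟨i, hi⟩, rfl⟩
      · rintro ⟨i, rfl⟩; exact ⟨i.1, i.2, rfl⟩
    have hxrw : xbar = ∑ i : {i : Fin d // P i}, (s⁻¹ * lam i.1) • v i.1 := by
      rw [hxbar, hAdef, ← sum_subtype_eq_sum_filter' P (fun j => lam j • v j),
        Finset.smul_sum]
      apply Finset.sum_congr rfl
      intro i _
      rw [mul_smul]
    rw [hrw, hxrw]
    apply mem_intrinsicInterior_of_pos
    · exact hv.comp_embedding (Function.Embedding.subtype P)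
    · intro i; exact mul_pos (inv_pos.mpr hs0) (hpos i.1)
    · rw [← Finset.mul_sum, sum_subtype_eq_sum_filter' P lam, ← hsdef,
        inv_mul_cancel₀ hs0.ne']
  have hyint : ybar ∈ intrinsicInterior ℝ (convexHull ℝ VG) := by
    have hrw : VG = Set.range (fun i : {i : Fin d // Q i} => v i.1) := by
      ext p
      simp only [Set.mem_range, hVGmem]
      constructor
      · rintro ⟨i, hi, rfl⟩; exact ⟨⟨i, hi⟩, rfl⟩
      · rintro ⟨i, rfl⟩; exact ⟨i.1, i.2, rfl⟩
    have hyrw : ybar = ∑ i : {i : Fin d // Q i}, (t⁻¹ * lam i.1) • v i.1 := by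
      rw [hybar, hBdef, ← sum_subtype_eq_sum_filter' Q (fun j => lam j • v j),
        Finset.smul_sum]
      apply Finset.sum_congr rfl
      intro i _
      rw [mul_smul]
    rw [hrw, hyrw]
    apply mem_intrinsicInterior_of_pos
    · exact hv.comp_embedding (Function.Embedding.subtype Q)
    · intro i; exact mul_pos (inv_pos.mpr ht0) (hpos i.1)
    · rw [← Finset.mul_sum, sum_subtype_eq_sum_filter' Q lam, ← htdef,
        inv_mul_cancel₀ ht0.ne']
  -- xbar, ybar in the affine spans
  have hxF : xbar ∈ EF := by
    have h1 : xbar ∈ convexHull ℝ VF := intrinsicInterior_subset hxint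
    have h2 := convexHull_subset_affineSpan (𝕜 := ℝ) VF
    have h3 : affineSpan ℝ VF ≤ EF := affineSpan_mono ℝ Set.subset_union_left
    exact h3 (h2 h1)
  have hyG : ybar ∈ EG := by
    have h1 : ybar ∈ convexHull ℝ VG := intrinsicInterior_subset hyint
    have h2 := convexHull_subset_affineSpan (𝕜 := ℝ) VG
    have h3 : affineSpan ℝ VG ≤ EG := affineSpan_mono ℝ Set.subset_union_left
    exact h3 (h2 h1)
  have hyF : ybar ∈ EF := by
    have key : ybar = t⁻¹ • (c -ᵥ xbar) +ᵥ xbar := by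
      rw [hc_eq]
      show ybar = t⁻¹ • (s • xbar + t • ybar - xbar) + xbar
      have hs1 : s = 1 - t := by linarith
      rw [hs1]
      match_scalars <;> field_simp <;> ring
    rw [key]
    exact AffineSubspace.smul_vsub_vadd_mem EF t⁻¹ hcF hxF hxF
  have hxG : xbar ∈ EG := by
    have key : xbar = s⁻¹ • (c -ᵥ ybar) +ᵥ ybar := by
      rw [hc_eq]
      show xbar = s⁻¹ • (s • xbar + t • ybar - ybar) + ybar
      have ht1 : t = 1 - s := by linarith
      rw [ht1]
      match_scalars <;> field_simp <;> ring
    rw [key]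
    exact AffineSubspace.smul_vsub_vadd_mem EG s⁻¹ hcG hyG hyG
  -- dimension of the intersection
  have hspan_top : affineSpan ℝ (Set.range v) = ⊤ := by
    rw [hv.affineSpan_eq_top_iff_card_eq_finrank_add_one]
    simp only [Fintype.card_fin]
    rw [finrank_euclideanSpace_fin]
    omega
  have hsup : EF.direction ⊔ EG.direction = ⊤ := by
    refine le_antisymm le_top ?_
    have hvec : vectorSpan ℝ (Set.range v) = ⊤ := by
      rw [← direction_affineSpan, hspan_top, direction_top]
    rw [← hvec, vectorSpan_def, Submodule.span_le]
    rintro z ⟨x, hx, y, hy, rfl⟩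
    obtain ⟨i, rfl⟩ := hx
    obtain ⟨j, rfl⟩ := hy
    have hmem : ∀ m : Fin d, v m -ᵥ c ∈ EF.direction ⊔ EG.direction := by
      intro m
      by_cases hm : P m
      · have hvm : v m ∈ VF := (hVFmem (v m)).mpr ⟨m, hm, rfl⟩
        exact Submodule.mem_sup_left (AffineSubspace.vsub_mem_direction
          (subset_affineSpan ℝ _ (Set.mem_union_left _ hvm)) hcF)
      · have hm' : Q m := by simp only [hPdef] at hm; simp only [hQdef]; omega
        have hvm : v m ∈ VG := (hVGmem (v m)).mpr ⟨m, hm', rfl⟩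
        exact Submodule.mem_sup_right (AffineSubspace.vsub_mem_direction
          (subset_affineSpan ℝ _ (Set.mem_union_left _ hvm)) hcG)
    have hdiff : v i -ᵥ v j = (v i -ᵥ c) - (v j -ᵥ c) := by
      simp only [vsub_eq_sub]
      abel
    rw [SetLike.mem_coe]
    show v i -ᵥ v j ∈ EF.direction ⊔ EG.direction
    rw [hdiff]
    exact Submodule.sub_mem _ (hmem i) (hmem j)
  have hdir_inf : (EF ⊓ EG).direction = EF.direction ⊓ EG.direction :=
    AffineSubspace.direction_inf_of_mem hcF hcG
  have hdim_inf : Module.finrank ℝ (EF ⊓ EG).direction = 1 := by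
    rw [hdir_inf]
    have hfr := Submodule.finrank_sup_add_finrank_inf_eq EF.direction EG.direction
    rw [hsup, hdimF, hdimG] at hfr
    have htop' : Module.finrank ℝ
        (⊤ : Submodule ℝ (EuclideanSpace ℝ (Fin (d - 1)))) = d - 1 := by
      rw [finrank_top, finrank_euclideanSpace_fin]
    rw [htop'] at hfr
    omega
  refine ⟨hdimF, hdimG, hdim_inf, ⟨hcF, hcG⟩, ⟨hxF, hxG⟩, ⟨hyF, hyG⟩, hxint, hyint⟩
end
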